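/- Let p be a strictly positive probability distribution on {0,1}^K and o a linear order on the K attributes. Let 𝒪 ∈ Seg(o) be a collection with p ∈ M(𝒪) that minimizes df among all collections in Seg(o) whose model contains p (such a collection exists since p ∈ M({A})). Then for every 𝒞 ∈ Seg(o) with p ∈ M(𝒞), every segment of 𝒪 is contained in some segment of 𝒞 (i.e. 𝒪 ⊑ 𝒞). Moreover, the minimizing collection 𝒪 is unique. -/

import Mathlib

open Finset

/-- The marginal probability `p(X = v)`: the probability that the coordinates in `X`
agree with `v`. -/
noncomputable def marg {K : ℕ} (p : (Fin K → Bool) → ℝ) (X : Finset (Fin K))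
    (v : Fin K → Bool) : ℝ :=
  ∑ t ∈ Finset.univ.filter (fun t : Fin K → Bool => ∀ i ∈ X, t i = v i), p t

/-- `p` is a probability distribution on `{0,1}^K`. -/
def IsDist {K : ℕ} (p : (Fin K → Bool) → ℝ) : Prop :=
  (∀ t, 0 ≤ p t) ∧ ∑ t : Fin K → Bool, p t = 1

/-- The empirical distribution of a dataset `D`. -/
noncomputable def empDist {K : ℕ} (D : Multiset (Fin K → Bool)) : (Fin K → Bool) → ℝ :=
  fun v => (D.count v : ℝ) / (Multiset.card D : ℝ)

/-- The entropy (base 2) of the marginal of `p` on the attribute set `X`,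
summing over representative vectors which are `false` outside of `X`. -/
noncomputable def segEntropy {K : ℕ} (p : (Fin K → Bool) → ℝ) (X : Finset (Fin K)) : ℝ :=
  -∑ v ∈ Finset.univ.filter (fun v : Fin K → Bool => ∀ i, i ∉ X → v i = false),
      marg p X v * Real.logb 2 (marg p X v)

/-- The item segment of the attributes at positions `a,…,b` in the order `o`. -/
def segIv {K : ℕ} (o : Equiv.Perm (Fin K)) (a b : ℕ) : Finset (Fin K) :=
  (Finset.univ.filter (fun k : Fin K => a ≤ (k : ℕ) ∧ (k : ℕ) ≤ b)).image o

/-- A collection `𝒞 = {C_1, …, C_L} ∈ Seg(o)` of item segments covering all attributes,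
forming an antichain, listed in the order of their first attribute.  The `i`-th segment
(for `0 ≤ i < L`) consists of the positions `s i, …, e i` in the order `o`. -/
structure SegColl (K : ℕ) where
  /-- number of segments -/
  L : ℕ
  hL : 0 < L
  /-- start position of each segment -/
  s : ℕ → ℕ
  /-- end position of each segment -/
  e : ℕ → ℕ
  s_mono : ∀ i, i + 1 < L → s i < s (i + 1)
  e_mono : ∀ i, i + 1 < L → e i < e (i + 1)
  s_le_e : ∀ i, i < L → s i ≤ e i
  s_first : s 0 = 0
  e_last : e (L - 1) = K - 1
  e_lt : ∀ i, i < L → e i < K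
  covers : ∀ i, i + 1 < L → s (i + 1) ≤ e i + 1

/-- The `i`-th item segment `C_{i+1}` of the collection, under the order `o`. -/
def SegColl.seg {K : ℕ} (𝒞 : SegColl K) (o : Equiv.Perm (Fin K)) (i : ℕ) : Finset (Fin K) :=
  segIv o (𝒞.s i) (𝒞.e i)

/-- The intersection `S_i = C_i ∩ C_{i+1}` of consecutive segments. -/
def SegColl.ovl {K : ℕ} (𝒞 : SegColl K) (o : Equiv.Perm (Fin K)) (i : ℕ) : Finset (Fin K) :=
  𝒞.seg o i ∩ 𝒞.seg o (i + 1)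

/-- Membership of a distribution `p` in the model `M(𝒞)`:
`p(A = t) ∏_{i=1}^{L-1} p(S_i = t) = ∏_{i=1}^{L} p(C_i = t)` for all `t`. -/
def memModel {K : ℕ} (o : Equiv.Perm (Fin K)) (𝒞 : SegColl K)
    (p : (Fin K → Bool) → ℝ) : Prop :=
  IsDist p ∧ ∀ t : Fin K → Bool,
    p t * ∏ i ∈ Finset.range (𝒞.L - 1), marg p (𝒞.ovl o i) t
      = ∏ i ∈ Finset.range 𝒞.L, marg p (𝒞.seg o i) t

/-- The number of free parameters `df(𝒞)`. -/
def SegColl.df {K : ℕ} (𝒞 : SegColl K) (o : Equiv.Perm (Fin K)) : ℤ :=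
  (∑ i ∈ Finset.range 𝒞.L, ((2 : ℤ) ^ (𝒞.seg o i).card - 1))
    - ∑ i ∈ Finset.range (𝒞.L - 1), ((2 : ℤ) ^ (𝒞.ovl o i).card - 1)

/-- The score of a single item segment `C`:
`score(C) = |D| H(C; D) + (log₂|D|/2)(2^{|C|} - 1)`. -/
noncomputable def segScore {K : ℕ} (D : Multiset (Fin K → Bool)) (C : Finset (Fin K)) : ℝ :=
  (Multiset.card D : ℝ) * segEntropy (empDist D) C
    + Real.logb 2 (Multiset.card D) / 2 * ((2 : ℝ) ^ C.card - 1)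

/-- The score of a collection: `score(𝒞) = ∑ score(C_i) - ∑ score(S_i)`. -/
noncomputable def collScore {K : ℕ} (D : Multiset (Fin K → Bool)) (o : Equiv.Perm (Fin K))
    (𝒞 : SegColl K) : ℝ :=
  ∑ i ∈ Finset.range 𝒞.L, segScore D (𝒞.seg o i)
    - ∑ i ∈ Finset.range (𝒞.L - 1), segScore D (𝒞.ovl o i)

/-- Two collections have the same segments (extensional equality). -/
def SegColl.SameSegs {K : ℕ} (o : Equiv.Perm (Fin K)) (𝒞 𝒟 : SegColl K) : Prop :=
  𝒞.L = 𝒟.L ∧ ∀ i < 𝒞.L, 𝒞.seg o i = 𝒟.seg o i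

/-!
For strictly positive `p`, `p ∈ M(𝒞)` holds iff every cut of `𝒞` is valid: writing
`C_j = [s_j, e_j]` for positions in the order `o`, the positions `[0, e_j]` and `[s_{j+1}, K-1]`
are conditionally independent given the overlap `[s_{j+1}, e_j]`. (One direction builds the
factorisation of the marginal on `[0, e_j]` segment by segment; the other marginalises it back.)
By weak union, a valid cut stays valid when its overlap is widened.

If a segment `[a, d]` of `𝒪` lies in no segment of `𝒞`, some cut `(b, c)` of `𝒞` falls strictly
inside it: `a < b ≤ c + 1` and `c < d`. Splitting `[a, d]` into `[a, c]` and `[b, d]` keeps `p`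
in the model; when a neighbouring segment of `𝒪` already contains one of the two pieces, the
cut is widened to that neighbour and the piece is dropped. In every case `df` falls by
`2^|[b, c]| + 2^|[a, d]| - 2^|[a, c]| - 2^|[b, d]| > 0`, contradicting the minimality of `𝒪`.
Two minimisers therefore refine each other, and two collections of segments ordered by first
attribute that refine each other coincide.
-/

section Marginals

variable {K : ℕ} (p : (Fin K → Bool) → ℝ)

def agreeOff (F : Finset (Fin K)) (t : Fin K → Bool) : Finset (Fin K → Bool) :=
  univ.filter fun t' => ∀ i ∉ F, t' i = t i

lemma marg_congr {X : Finset (Fin K)} {v w : Fin K → Bool} (h : ∀ i ∈ X, v i = w i) :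
    marg p X v = marg p X w := by
  unfold marg
  congr 1
  ext t
  simp +contextual [h]

lemma marg_pos (hpos : ∀ t, 0 < p t) (X : Finset (Fin K)) (v : Fin K → Bool) :
    0 < marg p X v :=
  Finset.sum_pos (fun t _ => hpos t) ⟨v, by simp⟩

lemma marg_univ (v : Fin K → Bool) : marg p univ v = p v := by
  rw [marg, show univ.filter (fun t : Fin K → Bool => ∀ i ∈ univ, t i = v i) = {v} by
    ext t; simp [funext_iff], sum_singleton]

lemma marg_eq_of_mem_agreeOff {X F : Finset (Fin K)} (hXF : Disjoint X F)
    {t t' : Fin K → Bool} (ht' : t' ∈ agreeOff F t) : marg p X t' = marg p X t :=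
  marg_congr p fun i hi => (mem_filter.mp ht').2 i (disjoint_left.mp hXF hi)

lemma sum_agreeOff_marg {X F : Finset (Fin K)} (hFX : F ⊆ X) (t : Fin K → Bool) :
    ∑ t' ∈ agreeOff F t, marg p X t' = marg p (X \ F) t := by
  classical
  unfold marg
  rw [Finset.sum_comm' (s' := fun t'' => {fun i => if i ∈ F then t'' i else t i})
    (t' := univ.filter fun t'' : Fin K → Bool => ∀ i ∈ X \ F, t'' i = t i)]
  · simp
  · intro t' t''
    simp only [agreeOff, mem_filter, mem_univ, true_and, mem_sdiff, mem_singleton, funext_iff]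
    constructor
    · rintro ⟨hoff, hX⟩
      refine ⟨fun i => ?_, fun i hi => (hX i hi.1).trans (hoff i hi.2)⟩
      split_ifs with hi
      · exact (hX i (hFX hi)).symm
      · exact hoff i hi
    · rintro ⟨ht', hX⟩
      refine ⟨fun i hi => by simp [ht' i, hi], fun i hi => ?_⟩
      by_cases hiF : i ∈ F
      · simp [ht' i, hiF]
      · simp [ht' i, hiF, hX i ⟨hi, hiF⟩]

lemma marg_sdiff_mul_eq {X Y F : Finset (Fin K)} (hFX : F ⊆ X) (hFY : F ⊆ Y)
    {t : Fin K → Bool} {a b : ℝ}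
    (h : ∀ t' ∈ agreeOff F t, marg p X t' * a = b * marg p Y t') :
    marg p (X \ F) t * a = b * marg p (Y \ F) t := by
  rw [← sum_agreeOff_marg p hFX, ← sum_agreeOff_marg p hFY, sum_mul, mul_sum]
  exact sum_congr rfl h

end Marginals

section CondIndep

variable {K : ℕ} (p : (Fin K → Bool) → ℝ)

/-- For `A ∪ B = univ`, this is the conditional independence `X_A ⟂ X_B | X_{A ∩ B}`. -/
def CondIndep (A B : Finset (Fin K)) : Prop :=
  ∀ t, p t * marg p (A ∩ B) t = marg p A t * marg p B t

variable {p}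

lemma CondIndep.symm {A B : Finset (Fin K)} (h : CondIndep p A B) : CondIndep p B A := by
  intro t
  rw [inter_comm, mul_comm (marg p B t)]
  exact h t

/-- The weak union property of conditional independence. -/
lemma CondIndep.mono_left (hpos : ∀ t, 0 < p t) {A A' B : Finset (Fin K)}
    (hAB : A ∪ B = univ) (hAA' : A ⊆ A') (h : CondIndep p A B) : CondIndep p A' B := by
  intro t
  have hA'B : A'ᶜ ⊆ B := fun x hx => by
    have := hAB ▸ mem_univ x
    simp only [mem_union, mem_compl] at this hx
    exact this.resolve_left fun hA => hx (hAA' hA)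
  have hdisj : ∀ {X}, X ⊆ A → Disjoint X A'ᶜ := fun hX =>
    disjoint_compl_right.mono_left (hX.trans hAA')
  have hsum : marg p A' t * marg p (A ∩ B) t = marg p A t * marg p (B ∩ A') t := by
    have := marg_sdiff_mul_eq p (subset_univ _) hA'B (a := marg p (A ∩ B) t)
      (b := marg p A t) fun t' ht' => by
        rw [marg_univ, ← marg_eq_of_mem_agreeOff p (hdisj inter_subset_left) ht',
          ← marg_eq_of_mem_agreeOff p (hdisj subset_rfl) ht']
        exact h t'
    simpa [sdiff_compl, inter_comm] using this
  rw [inter_comm A']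
  refine mul_right_cancel₀ (marg_pos p hpos (A ∩ B) t).ne' ?_
  linear_combination marg p (B ∩ A') t * h t - marg p B t * hsum

lemma CondIndep.mono_right (hpos : ∀ t, 0 < p t) {A B B' : Finset (Fin K)}
    (hAB : A ∪ B = univ) (hBB' : B ⊆ B') (h : CondIndep p A B) : CondIndep p A B' :=
  (h.symm.mono_left hpos (union_comm A B ▸ hAB) hBB').symm

end CondIndep

section Segments

variable {K : ℕ} (o : Equiv.Perm (Fin K))

lemma mem_segIv {a b : ℕ} {x : Fin K} :
    x ∈ segIv o a b ↔ a ≤ (o.symm x : ℕ) ∧ (o.symm x : ℕ) ≤ b := by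
  simp only [segIv, mem_image, mem_filter, mem_univ, true_and]
  exact ⟨by rintro ⟨k, hk, rfl⟩; simpa using hk, fun h => ⟨o.symm x, h, by simp⟩⟩

lemma segIv_subset_segIv {a b a' b' : ℕ} (ha : a' ≤ a) (hb : b ≤ b') :
    segIv o a b ⊆ segIv o a' b' := by
  intro x hx; rw [mem_segIv] at hx ⊢; omega

lemma le_and_le_of_segIv_subset {a b a' b' : ℕ} (hab : a ≤ b) (hb : b < K)
    (h : segIv o a b ⊆ segIv o a' b') : a' ≤ a ∧ b ≤ b' := by
  have mem : ∀ n (hn : n < K), a ≤ n → n ≤ b → a' ≤ n ∧ n ≤ b' := fun n hn h1 h2 => by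
    simpa using (mem_segIv o).mp (h ((mem_segIv o).mpr (by simpa using ⟨h1, h2⟩) : o ⟨n, hn⟩ ∈ _))
  exact ⟨(mem a (by omega) le_rfl hab).1, (mem b hb hab le_rfl).2⟩

lemma disjoint_segIv {a b c d : ℕ} (h : b < c) : Disjoint (segIv o a b) (segIv o c d) := by
  rw [disjoint_left]; intro x hx hx'; rw [mem_segIv] at hx hx'; omega

lemma segIv_inter_segIv (a b c d : ℕ) :
    segIv o a b ∩ segIv o c d = segIv o (max a c) (min b d) := by
  ext x; simp only [mem_inter, mem_segIv]; omega

lemma segIv_zero_union {u v : ℕ} (h : u ≤ v + 1) : segIv o 0 v ∪ segIv o u (K - 1) = univ := by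
  ext x; simp only [mem_union, mem_segIv, mem_univ, iff_true]; have := (o.symm x).isLt; omega

lemma segIv_zero_last : segIv o 0 (K - 1) = univ := by
  ext x; simp only [mem_segIv, mem_univ, iff_true]; have := (o.symm x).isLt; omega

lemma card_segIv {a b : ℕ} (hb : b < K) : (segIv o a b).card = b + 1 - a := by
  rw [segIv, card_image_of_injective _ o.injective, ← Nat.card_Ico a (b + 1)]
  refine card_nbij' (fun k => (k : ℕ)) (fun n => ⟨min n (K - 1), by omega⟩) ?_ ?_ ?_ ?_
  all_goals
    intro x hx
    simp only [coe_filter, coe_Ico, mem_univ, true_and, Set.mem_ofPred_eq, Set.mem_Ico,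
      Fin.ext_iff] at hx ⊢
    omega

end Segments

namespace SegColl

variable {K : ℕ} (𝒞 : SegColl K) (o : Equiv.Perm (Fin K))

lemma s_lt_s {i j : ℕ} (hij : i < j) (hj : j < 𝒞.L) : 𝒞.s i < 𝒞.s j := by
  induction j, hij using Nat.le_induction with
  | base => exact 𝒞.s_mono i hj
  | succ j _ ih => exact (ih (by omega)).trans (𝒞.s_mono j hj)

lemma e_lt_e {i j : ℕ} (hij : i < j) (hj : j < 𝒞.L) : 𝒞.e i < 𝒞.e j := by
  induction j, hij using Nat.le_induction with
  | base => exact 𝒞.e_mono i hj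
  | succ j _ ih => exact (ih (by omega)).trans (𝒞.e_mono j hj)

lemma s_le_s {i j : ℕ} (hij : i ≤ j) (hj : j < 𝒞.L) : 𝒞.s i ≤ 𝒞.s j :=
  hij.eq_or_lt.elim (fun h => h ▸ le_rfl) fun h => (𝒞.s_lt_s h hj).le

lemma e_le_e {i j : ℕ} (hij : i ≤ j) (hj : j < 𝒞.L) : 𝒞.e i ≤ 𝒞.e j :=
  hij.eq_or_lt.elim (fun h => h ▸ le_rfl) fun h => (𝒞.e_lt_e h hj).le

lemma ovl_eq {j : ℕ} (hj : j + 1 < 𝒞.L) : 𝒞.ovl o j = segIv o (𝒞.s (j + 1)) (𝒞.e j) := by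
  have := 𝒞.s_mono j hj
  have := 𝒞.e_mono j hj
  ext x; simp only [ovl, seg, mem_inter, mem_segIv]; omega

lemma ovl_subset_seg (j : ℕ) : 𝒞.ovl o j ⊆ 𝒞.seg o j := inter_subset_left

lemma ovl_subset_seg_succ (j : ℕ) : 𝒞.ovl o j ⊆ 𝒞.seg o (j + 1) := inter_subset_right

lemma segIv_inter_segIv_eq_ovl {j : ℕ} (hj : j + 1 < 𝒞.L) :
    segIv o 0 (𝒞.e j) ∩ segIv o (𝒞.s (j + 1)) (K - 1) = 𝒞.ovl o j := by
  have := 𝒞.e_lt j (by omega)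
  rw [segIv_inter_segIv, 𝒞.ovl_eq o hj, max_eq_right (Nat.zero_le _), min_eq_left (by omega)]

lemma seg_subset_segIv_zero {i j : ℕ} (hij : i ≤ j) (hj : j < 𝒞.L) :
    𝒞.seg o i ⊆ segIv o 0 (𝒞.e j) :=
  segIv_subset_segIv o (Nat.zero_le _) (𝒞.e_le_e hij hj)

lemma seg_subset_segIv_last {i j : ℕ} (hji : j ≤ i) (hi : i < 𝒞.L) :
    𝒞.seg o i ⊆ segIv o (𝒞.s j) (K - 1) :=
  segIv_subset_segIv o (𝒞.s_le_s hji hi) (by have := 𝒞.e_lt i hi; omega)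

lemma eq_of_seg_subset_seg {i j : ℕ} (hi : i < 𝒞.L) (hj : j < 𝒞.L)
    (h : 𝒞.seg o i ⊆ 𝒞.seg o j) : i = j := by
  have := le_and_le_of_segIv_subset o (𝒞.s_le_e i hi) (𝒞.e_lt i hi) h
  rcases lt_trichotomy i j with hij | rfl | hji
  · have := 𝒞.s_lt_s hij hj; omega
  · rfl
  · have := 𝒞.e_lt_e hji hi; omega

end SegColl

section Model

variable {K : ℕ} {p : (Fin K → Bool) → ℝ} {o : Equiv.Perm (Fin K)}

variable (p o) in
/-- The cut between positions `u` and `v` of `o`: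
`X_{[0, v]} ⟂ X_{[u, K-1]} | X_{[u, v]}` (for `u ≤ v + 1`). -/
def CutValid (u v : ℕ) : Prop :=
  CondIndep p (segIv o 0 v) (segIv o u (K - 1))

lemma CutValid.widen (hpos : ∀ t, 0 < p t) {u v u' v' : ℕ} (huv : u ≤ v + 1)
    (hu : u' ≤ u) (hv : v ≤ v') (h : CutValid p o u v) : CutValid p o u' v' :=
  (h.mono_left hpos (segIv_zero_union o huv) (segIv_subset_segIv o le_rfl hv)).mono_right hpos
    (segIv_zero_union o (by omega)) (segIv_subset_segIv o hu le_rfl)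

namespace SegColl

variable (p o) in
def PrefixFactorizes (𝒞 : SegColl K) (j : ℕ) : Prop :=
  ∀ t, marg p (segIv o 0 (𝒞.e j)) t * ∏ i ∈ range j, marg p (𝒞.ovl o i) t
    = ∏ i ∈ range (j + 1), marg p (𝒞.seg o i) t

variable (𝒞 : SegColl K)

lemma prefixFactorizes_zero : 𝒞.PrefixFactorizes p o 0 := by
  simp [PrefixFactorizes, seg, 𝒞.s_first]

lemma prefixFactorizes_last_iff :
    𝒞.PrefixFactorizes p o (𝒞.L - 1) ↔ ∀ t, p t * ∏ i ∈ range (𝒞.L - 1), marg p (𝒞.ovl o i) t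
      = ∏ i ∈ range 𝒞.L, marg p (𝒞.seg o i) t := by
  rw [PrefixFactorizes, 𝒞.e_last, segIv_zero_last, Nat.sub_add_cancel 𝒞.hL]
  simp only [marg_univ]

lemma prefixFactorizes_succ {j : ℕ} (hj : j + 1 < 𝒞.L) (hV : CutValid p o (𝒞.s (j + 1)) (𝒞.e j))
    (h : 𝒞.PrefixFactorizes p o j) : 𝒞.PrefixFactorizes p o (j + 1) := by
  intro t
  have hej := 𝒞.e_mono j hj
  have heK := 𝒞.e_lt (j + 1) hj
  set F := segIv o (𝒞.e (j + 1) + 1) (K - 1)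
  have hsum := marg_sdiff_mul_eq p (X := univ) (Y := segIv o (𝒞.s (j + 1)) (K - 1)) (F := F)
    (subset_univ _) (segIv_subset_segIv o (by have := 𝒞.s_le_e (j + 1) hj; omega) le_rfl)
    (t := t) (a := marg p (𝒞.ovl o j) t) (b := marg p (segIv o 0 (𝒞.e j)) t) fun t' ht' => by
      rw [marg_univ, ← marg_eq_of_mem_agreeOff p ((disjoint_segIv o (by omega)).mono_left
          ((𝒞.ovl_subset_seg o j).trans (𝒞.seg_subset_segIv_zero o le_rfl (by omega)))) ht',
        ← marg_eq_of_mem_agreeOff p (disjoint_segIv o (by omega)) ht',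
        ← 𝒞.segIv_inter_segIv_eq_ovl o hj]
      exact hV t'
  have hX : univ \ F = segIv o 0 (𝒞.e (j + 1)) := by
    ext x; simp only [F, mem_sdiff, mem_univ, true_and, mem_segIv]; have := (o.symm x).isLt; omega
  have hY : segIv o (𝒞.s (j + 1)) (K - 1) \ F = 𝒞.seg o (j + 1) := by
    ext x; simp only [F, seg, mem_sdiff, mem_segIv]; omega
  rw [hX, hY] at hsum
  rw [prod_range_succ, prod_range_succ _ (j + 1), ← h t]
  linear_combination (∏ i ∈ range j, marg p (𝒞.ovl o i) t) * hsum

lemma prefixFactorizes_of_succ (hpos : ∀ t, 0 < p t) {j : ℕ} (hj : j + 1 < 𝒞.L)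
    (h : 𝒞.PrefixFactorizes p o (j + 1)) : 𝒞.PrefixFactorizes p o j := by
  intro t
  have hej := 𝒞.e_mono j hj
  have hcov := 𝒞.covers j hj
  set F := segIv o (𝒞.e j + 1) (𝒞.e (j + 1))
  have hconst : ∀ t' ∈ agreeOff F t, ∀ i ≤ j,
      marg p (𝒞.seg o i) t' = marg p (𝒞.seg o i) t ∧
        marg p (𝒞.ovl o i) t' = marg p (𝒞.ovl o i) t := fun t' ht' i hi => by
    have hdisj : Disjoint (𝒞.seg o i) F := (disjoint_segIv o (Nat.lt_succ_self _)).mono_left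
      (𝒞.seg_subset_segIv_zero o hi (by omega))
    exact ⟨marg_eq_of_mem_agreeOff p hdisj ht',
      marg_eq_of_mem_agreeOff p (hdisj.mono_left (𝒞.ovl_subset_seg o i)) ht'⟩
  have hsum := marg_sdiff_mul_eq p (X := segIv o 0 (𝒞.e (j + 1))) (Y := 𝒞.seg o (j + 1)) (F := F)
    (segIv_subset_segIv o (Nat.zero_le _) le_rfl) (segIv_subset_segIv o (by omega) le_rfl)
    (t := t) (a := ∏ i ∈ range (j + 1), marg p (𝒞.ovl o i) t)
    (b := ∏ i ∈ range (j + 1), marg p (𝒞.seg o i) t) fun t' ht' => by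
      have := h t'
      rw [prod_range_succ _ (j + 1)] at this
      rwa [prod_congr rfl fun i hi => (hconst t' ht' i (by simpa [Nat.lt_succ_iff] using hi)).1,
        prod_congr rfl fun i hi => (hconst t' ht' i (by simpa [Nat.lt_succ_iff] using hi)).2]
        at this
  have hX : segIv o 0 (𝒞.e (j + 1)) \ F = segIv o 0 (𝒞.e j) := by
    ext x; simp only [F, mem_sdiff, mem_segIv]; omega
  have hY : 𝒞.seg o (j + 1) \ F = 𝒞.ovl o j := by
    rw [𝒞.ovl_eq o hj]; ext x; simp only [F, seg, mem_sdiff, mem_segIv]; omega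
  rw [hX, hY, prod_range_succ, prod_range_succ] at hsum
  refine mul_right_cancel₀ (marg_pos p hpos (𝒞.ovl o j) t).ne' ?_
  rw [prod_range_succ]
  linear_combination hsum

lemma prefixFactorizes_of_memModel (hpos : ∀ t, 0 < p t) (h : memModel o 𝒞 p) {j : ℕ}
    (hj : j < 𝒞.L) : 𝒞.PrefixFactorizes p o j :=
  Nat.decreasingInduction (motive := fun j _ => 𝒞.PrefixFactorizes p o j)
    (fun k hk => 𝒞.prefixFactorizes_of_succ hpos (by omega))
    ((𝒞.prefixFactorizes_last_iff).mpr h.2) (Nat.le_sub_one_of_lt hj)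

lemma memModel_of_cutValid (hdist : IsDist p)
    (hV : ∀ j, j + 1 < 𝒞.L → CutValid p o (𝒞.s (j + 1)) (𝒞.e j)) : memModel o 𝒞 p := by
  have : ∀ j < 𝒞.L, 𝒞.PrefixFactorizes p o j := by
    intro j hj
    induction j with
    | zero => exact 𝒞.prefixFactorizes_zero
    | succ j ih => exact 𝒞.prefixFactorizes_succ hj (hV j hj) (ih (by omega))
  exact ⟨hdist, (𝒞.prefixFactorizes_last_iff).mp (this _ (Nat.sub_lt 𝒞.hL one_pos))⟩

lemma cutValid_of_memModel (hpos : ∀ t, 0 < p t) (h : memModel o 𝒞 p) {j : ℕ}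
    (hj : j + 1 < 𝒞.L) : CutValid p o (𝒞.s (j + 1)) (𝒞.e j) := by
  have hs : 0 < 𝒞.s (j + 1) := 𝒞.s_first ▸ 𝒞.s_lt_s (Nat.succ_pos j) hj
  have hcov := 𝒞.covers j hj
  set F := segIv o 0 (𝒞.s (j + 1) - 1)
  set Sr := fun t => ∏ i ∈ Ico (j + 1) (𝒞.L - 1), marg p (𝒞.ovl o i) t
  set Cr := fun t => ∏ i ∈ Ico (j + 1) 𝒞.L, marg p (𝒞.seg o i) t
  have hSr : ∀ t, 0 < Sr t := fun t => prod_pos fun i _ => marg_pos p hpos _ t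
  -- the model equation, divided by the prefix factorisation of the first `j + 1` segments
  have hright : ∀ t,
      p t * (marg p (𝒞.ovl o j) t * Sr t) = marg p (segIv o 0 (𝒞.e j)) t * Cr t := by
    intro t
    have hm := h.2 t
    rw [← prod_range_mul_prod_Ico _ (show j + 1 ≤ 𝒞.L - 1 by omega), prod_range_succ,
      ← prod_range_mul_prod_Ico _ (show j + 1 ≤ 𝒞.L by omega),
      ← 𝒞.prefixFactorizes_of_memModel hpos h (by omega) t] at hm
    have hSl : 0 < ∏ i ∈ range j, marg p (𝒞.ovl o i) t := prod_pos fun i _ => marg_pos p hpos _ t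
    refine mul_left_cancel₀ hSl.ne' ?_
    linear_combination hm
  have hF : ∀ {X}, X ⊆ segIv o (𝒞.s (j + 1)) (K - 1) → Disjoint X F := fun hX =>
    ((disjoint_segIv o (by omega)).symm.mono_left hX)
  -- summing `hright` over the positions before the cut identifies `Cr / Sr` as the marginal
  -- on the positions after it
  have hsuf : ∀ t, marg p (segIv o (𝒞.s (j + 1)) (K - 1)) t * Sr t = Cr t := by
    intro t
    have hconst : ∀ t' ∈ agreeOff F t, ∀ i ∈ Ico (j + 1) 𝒞.L,
        marg p (𝒞.seg o i) t' = marg p (𝒞.seg o i) t ∧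
          marg p (𝒞.ovl o i) t' = marg p (𝒞.ovl o i) t := fun t' ht' i hi => by
      have hdisj := hF (𝒞.seg_subset_segIv_last o (mem_Ico.mp hi).1 (mem_Ico.mp hi).2)
      exact ⟨marg_eq_of_mem_agreeOff p hdisj ht',
        marg_eq_of_mem_agreeOff p (hdisj.mono_left (𝒞.ovl_subset_seg o i)) ht'⟩
    have hsum := marg_sdiff_mul_eq p (X := univ) (Y := segIv o 0 (𝒞.e j)) (F := F)
      (subset_univ _) (segIv_subset_segIv o le_rfl (by omega)) (t := t)
      (a := marg p (𝒞.ovl o j) t * Sr t) (b := Cr t) fun t' ht' => by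
        rw [marg_univ, ← marg_eq_of_mem_agreeOff p (hF ((𝒞.ovl_subset_seg_succ o j).trans
          (𝒞.seg_subset_segIv_last o le_rfl hj))) ht',
          ← show Sr t' = Sr t from prod_congr rfl fun i hi =>
            (hconst t' ht' i (Ico_subset_Ico_right (Nat.sub_le _ _) hi)).2,
          ← show Cr t' = Cr t from prod_congr rfl fun i hi => (hconst t' ht' i hi).1]
        linear_combination hright t'
    have hX : univ \ F = segIv o (𝒞.s (j + 1)) (K - 1) := by
      ext x; simp only [F, mem_sdiff, mem_univ, true_and, mem_segIv]
      have := (o.symm x).isLt; omega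
    have hY : segIv o 0 (𝒞.e j) \ F = 𝒞.ovl o j := by
      rw [𝒞.ovl_eq o hj]; ext x; simp only [F, mem_sdiff, mem_segIv]; omega
    rw [hX, hY] at hsum
    refine mul_left_cancel₀ (marg_pos p hpos (𝒞.ovl o j) t).ne' ?_
    linear_combination hsum
  intro t
  rw [𝒞.segIv_inter_segIv_eq_ovl o hj]
  refine mul_right_cancel₀ (hSr t).ne' ?_
  linear_combination hright t - marg p (segIv o 0 (𝒞.e j)) t * hsuf t

end SegColl

end Model

section DegreesOfFreedom

lemma sum_range_eq_sub_add_of_eq_of_ne {f g : ℕ → ℤ} {i n : ℕ} (hi : i < n)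
    (h : ∀ k < n, k ≠ i → g k = f k) :
    ∑ k ∈ range n, g k = ∑ k ∈ range n, f k - f i + g i := by
  rw [← add_sum_erase _ f (mem_range.2 hi), ← add_sum_erase _ g (mem_range.2 hi),
    sum_congr rfl fun k hk => h k (mem_range.1 (mem_of_mem_erase hk)) (ne_of_mem_erase hk)]
  ring

lemma sum_range_succ_eq_of_insert {f g : ℕ → ℤ} {i n : ℕ} (hi : i ≤ n)
    (hlt : ∀ k < i, g k = f k) (hge : ∀ k, i ≤ k → k < n → g (k + 1) = f k) :
    ∑ k ∈ range (n + 1), g k = ∑ k ∈ range n, f k + g i := by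
  obtain ⟨r, rfl⟩ : ∃ r, n = i + r := ⟨n - i, by omega⟩
  have hg : ∑ k ∈ range (i + r + 1), g k
      = ∑ k ∈ range i, g k + g i + ∑ k ∈ range r, g (i + 1 + k) := by
    rw [show i + r + 1 = i + 1 + r by omega, sum_range_add, sum_range_succ]
  rw [hg, sum_range_add, sum_congr rfl fun k hk => hlt k (mem_range.1 hk),
    sum_congr rfl fun k hk => show g (i + 1 + k) = f (i + k) by
      rw [← hge (i + k) (by omega) (by simp at hk; omega)]; ring_nf]
  ring

lemma sum_range_succ_eq_of_replace {f g : ℕ → ℤ} {i n : ℕ} (hi : i < n)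
    (hlt : ∀ k < i, g k = f k) (hgt : ∀ k, i < k → k < n → g (k + 1) = f k) :
    ∑ k ∈ range (n + 1), g k = ∑ k ∈ range n, f k - f i + g i + g (i + 1) := by
  obtain ⟨r, rfl⟩ : ∃ r, n = i + 1 + r := ⟨n - (i + 1), by omega⟩
  have hg : ∑ k ∈ range (i + 1 + r + 1), g k
      = ∑ k ∈ range i, g k + g i + g (i + 1) + ∑ k ∈ range r, g (i + 2 + k) := by
    rw [show i + 1 + r + 1 = i + 1 + 1 + r by omega, sum_range_add, sum_range_succ,
      sum_range_succ]
  have hf : ∑ k ∈ range (i + 1 + r), f k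
      = ∑ k ∈ range i, f k + f i + ∑ k ∈ range r, f (i + 1 + k) := by
    rw [sum_range_add, sum_range_succ]
  rw [hg, hf, sum_congr rfl fun k hk => hlt k (mem_range.1 hk),
    sum_congr rfl fun k hk => show g (i + 2 + k) = f (i + 1 + k) by
      rw [← hgt (i + 1 + k) (by omega) (by simp at hk; omega)]; ring_nf]
  ring

def segDf (a b : ℕ) : ℤ := 2 ^ (b + 1 - a) - 1

lemma segDf_add_segDf_lt {a b c d : ℕ} (hab : a < b) (hbc : b ≤ c + 1) (hcd : c < d) :
    segDf a c + segDf b d < segDf b c + segDf a d := by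
  obtain ⟨x, hx⟩ : ∃ x, b - a = x + 1 := ⟨b - a - 1, by omega⟩
  obtain ⟨z, hz⟩ : ∃ z, d - c = z + 1 := ⟨d - c - 1, by omega⟩
  have hX : (1 : ℤ) < 2 ^ (x + 1) := one_lt_pow₀ one_lt_two (Nat.succ_ne_zero x)
  have hZ : (1 : ℤ) < 2 ^ (z + 1) := one_lt_pow₀ one_lt_two (Nat.succ_ne_zero z)
  have hY : (0 : ℤ) < 2 ^ (c + 1 - b) := by positivity
  unfold segDf
  rw [show c + 1 - a = (x + 1) + (c + 1 - b) by omega,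
    show d + 1 - b = (c + 1 - b) + (z + 1) by omega,
    show d + 1 - a = (x + 1) + (c + 1 - b) + (z + 1) by omega,
    pow_add (2 : ℤ) (x + 1 + (c + 1 - b)), pow_add (2 : ℤ) (x + 1), pow_add (2 : ℤ) (c + 1 - b)]
  nlinarith [mul_pos hY (mul_pos (sub_pos.2 hX) (sub_pos.2 hZ))]

end DegreesOfFreedom

namespace SegColl

variable {K : ℕ} {p : (Fin K → Bool) → ℝ} {o : Equiv.Perm (Fin K)}

lemma df_eq (𝒞 : SegColl K) (o : Equiv.Perm (Fin K)) :
    𝒞.df o = ∑ k ∈ range 𝒞.L, segDf (𝒞.s k) (𝒞.e k)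
      - ∑ k ∈ range (𝒞.L - 1), segDf (𝒞.s (k + 1)) (𝒞.e k) := by
  rw [df]
  congr 1 <;> refine sum_congr rfl fun k hk => ?_ <;> rw [mem_range] at hk
  · rw [seg, card_segIv o (𝒞.e_lt k hk), segDf]
  · rw [𝒞.ovl_eq o (by omega), card_segIv o (𝒞.e_lt k (by omega)), segDf]

variable (𝒪 : SegColl K)

lemma exists_df_lt_of_split (hpos : ∀ t, 0 < p t) (h𝒪 : memModel o 𝒪 p) {i u v : ℕ}
    (hi : i < 𝒪.L) (hsu : 𝒪.s i < u) (huv : u ≤ v + 1) (hve : v < 𝒪.e i)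
    (hl : 0 < i → 𝒪.e (i - 1) < v) (hr : i + 1 < 𝒪.L → u < 𝒪.s (i + 1))
    (hV : CutValid p o u v) : ∃ 𝒟 : SegColl K, memModel o 𝒟 p ∧ 𝒟.df o < 𝒪.df o := by
  have := 𝒪.s_mono; have := 𝒪.e_mono; have := 𝒪.s_le_e; have := 𝒪.e_lt; have := 𝒪.covers
  have := 𝒪.s_first; have := 𝒪.e_last
  let 𝒟 : SegColl K :=
    { L := 𝒪.L + 1
      hL := by omega
      s := fun k => if k ≤ i then 𝒪.s k else if k = i + 1 then u else 𝒪.s (k - 1)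
      e := fun k => if k < i then 𝒪.e k else if k = i then v else 𝒪.e (k - 1)
      s_mono := by intro k hk; split_ifs <;> grind
      e_mono := by intro k hk; split_ifs <;> grind
      s_le_e := by intro k hk; split_ifs <;> grind
      s_first := by grind
      e_last := by grind
      e_lt := by intro k hk; split_ifs <;> grind
      covers := by intro k hk; split_ifs <;> grind }
  have hcut := fun j => 𝒪.cutValid_of_memModel hpos h𝒪 (j := j)
  refine ⟨𝒟, 𝒟.memModel_of_cutValid h𝒪.1 fun j hj => ?_, ?_⟩
  · dsimp only [𝒟] at hj ⊢
    split_ifs <;> grind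
  · have hseg := sum_range_succ_eq_of_replace (f := fun k => segDf (𝒪.s k) (𝒪.e k))
      (g := fun k => segDf (𝒟.s k) (𝒟.e k)) hi (fun k hk => by grind) (fun k hk hk' => by grind)
    have hovl := sum_range_succ_eq_of_insert (f := fun k => segDf (𝒪.s (k + 1)) (𝒪.e k))
      (g := fun k => segDf (𝒟.s (k + 1)) (𝒟.e k)) (show i ≤ 𝒪.L - 1 by omega)
      (fun k hk => by grind) (fun k hk hk' => by grind)
    have hs : 𝒟.s i = 𝒪.s i ∧ 𝒟.s (i + 1) = u := by simp [𝒟]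
    have he : 𝒟.e i = v ∧ 𝒟.e (i + 1) = 𝒪.e i := by simp [𝒟]
    rw [Nat.sub_add_cancel 𝒪.hL] at hovl
    rw [df_eq, df_eq, show 𝒟.L = 𝒪.L + 1 from rfl, Nat.add_sub_cancel, hseg, hovl, hs.1, hs.2,
      he.1, he.2]
    linarith [segDf_add_segDf_lt hsu huv hve]

lemma exists_df_lt_of_shrink_left (hpos : ∀ t, 0 < p t) (h𝒪 : memModel o 𝒪 p) {i u : ℕ}
    (hi : i < 𝒪.L) (hi0 : 0 < i) (hsu : 𝒪.s i < u) (hue : u ≤ 𝒪.e (i - 1) + 1)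
    (hr : i + 1 < 𝒪.L → u < 𝒪.s (i + 1)) (hV : CutValid p o u (𝒪.e (i - 1))) :
    ∃ 𝒟 : SegColl K, memModel o 𝒟 p ∧ 𝒟.df o < 𝒪.df o := by
  have := 𝒪.s_mono; have := 𝒪.e_mono; have := 𝒪.s_le_e; have := 𝒪.covers; have := 𝒪.s_first
  let 𝒟 : SegColl K :=
    { 𝒪 with
      s := fun k => if k = i then u else 𝒪.s k
      s_mono := by intro k hk; split_ifs <;> grind
      s_le_e := by intro k hk; split_ifs <;> grind
      s_first := by grind
      covers := by intro k hk; split_ifs <;> grind }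
  have hcut := fun j => 𝒪.cutValid_of_memModel hpos h𝒪 (j := j)
  refine ⟨𝒟, 𝒟.memModel_of_cutValid h𝒪.1 fun j hj => ?_, ?_⟩
  · dsimp only [𝒟] at hj ⊢
    split_ifs <;> grind
  · have hseg := sum_range_eq_sub_add_of_eq_of_ne (f := fun k => segDf (𝒪.s k) (𝒪.e k))
      (g := fun k => segDf (𝒟.s k) (𝒟.e k)) hi (fun k hk hki => by grind)
    have hovl := sum_range_eq_sub_add_of_eq_of_ne (f := fun k => segDf (𝒪.s (k + 1)) (𝒪.e k))
      (g := fun k => segDf (𝒟.s (k + 1)) (𝒟.e k)) (show i - 1 < 𝒪.L - 1 by omega)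
      (fun k hk hki => by grind)
    have hs : 𝒟.s i = u := if_pos rfl
    rw [df_eq, df_eq, show 𝒟.L = 𝒪.L from rfl, hseg, hovl, Nat.sub_add_cancel hi0, hs]
    linarith [segDf_add_segDf_lt hsu hue (𝒪.e_lt_e (Nat.sub_lt hi0 one_pos) hi)]

lemma exists_df_lt_of_shrink_right (hpos : ∀ t, 0 < p t) (h𝒪 : memModel o 𝒪 p) {i v : ℕ}
    (hi : i + 1 < 𝒪.L) (hsv : 𝒪.s (i + 1) ≤ v + 1) (hve : v < 𝒪.e i)
    (hl : 0 < i → 𝒪.e (i - 1) < v) (hV : CutValid p o (𝒪.s (i + 1)) v) :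
    ∃ 𝒟 : SegColl K, memModel o 𝒟 p ∧ 𝒟.df o < 𝒪.df o := by
  have := 𝒪.s_mono; have := 𝒪.e_mono; have := 𝒪.s_le_e; have := 𝒪.e_lt; have := 𝒪.covers
  have := 𝒪.e_last
  let 𝒟 : SegColl K :=
    { 𝒪 with
      e := fun k => if k = i then v else 𝒪.e k
      e_mono := by intro k hk; split_ifs <;> grind
      s_le_e := by intro k hk; split_ifs <;> grind
      e_last := by grind
      e_lt := by intro k hk; split_ifs <;> grind
      covers := by intro k hk; split_ifs <;> grind }
  have hcut := fun j => 𝒪.cutValid_of_memModel hpos h𝒪 (j := j)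
  refine ⟨𝒟, 𝒟.memModel_of_cutValid h𝒪.1 fun j hj => ?_, ?_⟩
  · dsimp only [𝒟] at hj ⊢
    split_ifs <;> grind
  · have hseg := sum_range_eq_sub_add_of_eq_of_ne (f := fun k => segDf (𝒪.s k) (𝒪.e k))
      (g := fun k => segDf (𝒟.s k) (𝒟.e k)) (show i < 𝒪.L by omega) (fun k hk hki => by grind)
    have hovl := sum_range_eq_sub_add_of_eq_of_ne (f := fun k => segDf (𝒪.s (k + 1)) (𝒪.e k))
      (g := fun k => segDf (𝒟.s (k + 1)) (𝒟.e k)) (show i < 𝒪.L - 1 by omega)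
      (fun k hk hki => by grind)
    have he : 𝒟.e i = v := if_pos rfl
    rw [df_eq, df_eq, show 𝒟.L = 𝒪.L from rfl, hseg, hovl, he]
    linarith [segDf_add_segDf_lt (𝒪.s_mono i hi) hsv hve]

lemma exists_df_lt_of_erase (hpos : ∀ t, 0 < p t) (h𝒪 : memModel o 𝒪 p) {i : ℕ}
    (hi : i + 1 < 𝒪.L) (hi0 : 0 < i) (hse : 𝒪.s (i + 1) ≤ 𝒪.e (i - 1) + 1)
    (hV : CutValid p o (𝒪.s (i + 1)) (𝒪.e (i - 1))) :
    ∃ 𝒟 : SegColl K, memModel o 𝒟 p ∧ 𝒟.df o < 𝒪.df o := by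
  have := 𝒪.s_mono; have := 𝒪.e_mono; have := 𝒪.s_le_e; have := 𝒪.e_lt; have := 𝒪.covers
  have := 𝒪.s_first; have := 𝒪.e_last
  let 𝒟 : SegColl K :=
    { L := 𝒪.L - 1
      hL := by omega
      s := fun k => if k < i then 𝒪.s k else 𝒪.s (k + 1)
      e := fun k => if k < i then 𝒪.e k else 𝒪.e (k + 1)
      s_mono := by intro k hk; split_ifs <;> grind
      e_mono := by intro k hk; split_ifs <;> grind
      s_le_e := by intro k hk; split_ifs <;> grind
      s_first := by grind
      e_last := by grind
      e_lt := by intro k hk; split_ifs <;> grind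
      covers := by intro k hk; split_ifs <;> grind }
  have hcut := fun j => 𝒪.cutValid_of_memModel hpos h𝒪 (j := j)
  refine ⟨𝒟, 𝒟.memModel_of_cutValid h𝒪.1 fun j hj => ?_, ?_⟩
  · dsimp only [𝒟] at hj ⊢
    split_ifs <;> grind
  · have hseg := sum_range_succ_eq_of_insert (f := fun k => segDf (𝒟.s k) (𝒟.e k))
      (g := fun k => segDf (𝒪.s k) (𝒪.e k)) (show i ≤ 𝒪.L - 1 by omega)
      (fun k hk => by grind) (fun k hk hk' => by grind)
    have hovl := sum_range_succ_eq_of_replace (f := fun k => segDf (𝒟.s (k + 1)) (𝒟.e k))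
      (g := fun k => segDf (𝒪.s (k + 1)) (𝒪.e k)) (show i - 1 < 𝒪.L - 1 - 1 by omega)
      (fun k hk => by grind) (fun k hk hk' => by grind)
    have hs : 𝒟.s i = 𝒪.s (i + 1) := if_neg (lt_irrefl i)
    have he : 𝒟.e (i - 1) = 𝒪.e (i - 1) := if_pos (Nat.sub_lt hi0 one_pos)
    rw [Nat.sub_add_cancel (by omega)] at hseg hovl
    rw [df_eq, df_eq, show 𝒟.L = 𝒪.L - 1 from rfl, hseg, hovl, Nat.sub_add_cancel hi0, hs, he]
    linarith [segDf_add_segDf_lt (𝒪.s_mono i hi) hse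
      (𝒪.e_lt_e (Nat.sub_lt hi0 one_pos) (by omega))]

lemma exists_df_lt_of_cutValid (hpos : ∀ t, 0 < p t) (h𝒪 : memModel o 𝒪 p)
    {i u v : ℕ} (hi : i < 𝒪.L) (hsu : 𝒪.s i < u) (huv : u ≤ v + 1) (hve : v < 𝒪.e i)
    (hV : CutValid p o u v) : ∃ 𝒟 : SegColl K, memModel o 𝒟 p ∧ 𝒟.df o < 𝒪.df o := by
  by_cases hl : 0 < i ∧ v ≤ 𝒪.e (i - 1) <;> by_cases hr : i + 1 < 𝒪.L ∧ 𝒪.s (i + 1) ≤ u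
  · exact 𝒪.exists_df_lt_of_erase hpos h𝒪 hr.1 hl.1 (by omega)
      (hV.widen hpos huv hr.2 hl.2)
  · exact 𝒪.exists_df_lt_of_shrink_left hpos h𝒪 hi hl.1 hsu (by omega) (by omega)
      (hV.widen hpos huv le_rfl hl.2)
  · exact 𝒪.exists_df_lt_of_shrink_right hpos h𝒪 hr.1 (by omega) hve (by omega)
      (hV.widen hpos huv hr.2 le_rfl)
  · exact 𝒪.exists_df_lt_of_split hpos h𝒪 hi hsu huv hve (by omega) (by omega) hV

lemma exists_cut_of_forall_not_le_and_le (𝒞 : SegColl K) {a b : ℕ} (hb : b < K)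
    (h : ∀ j < 𝒞.L, ¬(𝒞.s j ≤ a ∧ b ≤ 𝒞.e j)) :
    ∃ j, j + 1 < 𝒞.L ∧ a < 𝒞.s (j + 1) ∧ 𝒞.e j < b := by
  classical
  set j := Nat.findGreatest (fun n => 𝒞.s n ≤ a) (𝒞.L - 1)
  have hjL : j < 𝒞.L := (Nat.findGreatest_le _).trans_lt (Nat.sub_lt 𝒞.hL one_pos)
  have hsj : 𝒞.s j ≤ a := Nat.findGreatest_spec (P := fun n => 𝒞.s n ≤ a) (Nat.zero_le _)
    (by simp [𝒞.s_first])
  have hej : 𝒞.e j < b := by have := h j hjL; omega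
  have hj1 : j + 1 < 𝒞.L := by
    by_contra hj1
    have := 𝒞.e_last
    rw [show 𝒞.L - 1 = j by omega] at this
    omega
  have hsj1 : ¬𝒞.s (j + 1) ≤ a :=
    Nat.findGreatest_is_greatest (P := fun n => 𝒞.s n ≤ a) (Nat.lt_succ_self j) (by omega)
  exact ⟨j, hj1, not_le.mp hsj1, hej⟩

variable (o) in
/-- The paper's `𝒞 ⊑ 𝒟`. -/
def Refines (𝒞 𝒟 : SegColl K) : Prop :=
  ∀ i < 𝒞.L, ∃ j < 𝒟.L, 𝒞.seg o i ⊆ 𝒟.seg o j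

lemma refines_of_forall_df_le (hpos : ∀ t, 0 < p t) {𝒪 𝒞 : SegColl K} (h𝒪 : memModel o 𝒪 p)
    (hmin : ∀ 𝒟 : SegColl K, memModel o 𝒟 p → 𝒪.df o ≤ 𝒟.df o) (h𝒞 : memModel o 𝒞 p) :
    Refines o 𝒪 𝒞 := by
  intro i hi
  by_contra! hno
  obtain ⟨j, hj, hsu, hve⟩ := 𝒞.exists_cut_of_forall_not_le_and_le (𝒪.e_lt i hi)
    fun j hj hle => hno j hj (segIv_subset_segIv o hle.1 hle.2)
  obtain ⟨𝒟, h𝒟, hlt⟩ := 𝒪.exists_df_lt_of_cutValid hpos h𝒪 hi hsu (𝒞.covers j hj) hve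
    (𝒞.cutValid_of_memModel hpos h𝒞 hj)
  exact (hmin 𝒟 h𝒟).not_gt hlt

lemma s_eq_of_seg_eq {𝒞 𝒟 : SegColl K} {i j : ℕ} (hi : i < 𝒞.L) (hj : j < 𝒟.L)
    (h : 𝒞.seg o i = 𝒟.seg o j) : 𝒞.s i = 𝒟.s j :=
  le_antisymm (le_and_le_of_segIv_subset o (𝒟.s_le_e j hj) (𝒟.e_lt j hj) h.ge).1
    (le_and_le_of_segIv_subset o (𝒞.s_le_e i hi) (𝒞.e_lt i hi) h.le).1

lemma le_of_seg_eq {𝒞 𝒟 : SegColl K} (h : ∀ i < 𝒞.L, ∃ j < 𝒟.L, 𝒞.seg o i = 𝒟.seg o j)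
    {i j : ℕ} (hi : i < 𝒞.L) (hj : j < 𝒟.L) (hij : 𝒞.seg o i = 𝒟.seg o j) : i ≤ j := by
  induction i generalizing j with
  | zero => exact Nat.zero_le _
  | succ i ih =>
    obtain ⟨j', hj', hij'⟩ := h i (by omega)
    have hj'j : j' < j := by
      by_contra! hjj'
      have := 𝒞.s_mono i hi
      have := 𝒟.s_le_s hjj' hj'
      have := s_eq_of_seg_eq (by omega) hj' hij'
      have := s_eq_of_seg_eq hi hj hij
      omega
    have := ih (by omega) hj' hij'
    omega

lemma Refines.exists_seg_eq {𝒞 𝒟 : SegColl K} (h₁ : Refines o 𝒞 𝒟) (h₂ : Refines o 𝒟 𝒞)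
    {i : ℕ} (hi : i < 𝒞.L) : ∃ j < 𝒟.L, 𝒞.seg o i = 𝒟.seg o j := by
  obtain ⟨j, hj, hij⟩ := h₁ i hi
  obtain ⟨k, hk, hjk⟩ := h₂ j hj
  obtain rfl := 𝒞.eq_of_seg_subset_seg o hi hk (hij.trans hjk)
  exact ⟨j, hj, hij.antisymm hjk⟩

lemma Refines.antisymm {𝒞 𝒟 : SegColl K} (h₁ : Refines o 𝒞 𝒟) (h₂ : Refines o 𝒟 𝒞) :
    SameSegs o 𝒞 𝒟 := by
  have h₁₂ : ∀ i < 𝒞.L, ∃ j < 𝒟.L, 𝒞.seg o i = 𝒟.seg o j := fun _ hi => h₁.exists_seg_eq h₂ hi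
  have h₂₁ : ∀ j < 𝒟.L, ∃ i < 𝒞.L, 𝒟.seg o j = 𝒞.seg o i := fun _ hj => h₂.exists_seg_eq h₁ hj
  have hsame : ∀ i < 𝒞.L, i < 𝒟.L ∧ 𝒞.seg o i = 𝒟.seg o i := fun i hi => by
    obtain ⟨j, hj, hij⟩ := h₁₂ i hi
    obtain rfl : i = j := le_antisymm (le_of_seg_eq h₁₂ hi hj hij)
      (le_of_seg_eq h₂₁ hj hi hij.symm)
    exact ⟨hj, hij⟩
  refine ⟨le_antisymm ?_ ?_, fun i hi => (hsame i hi).2⟩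
  · have := (hsame (𝒞.L - 1) (by have := 𝒞.hL; omega)).1
    omega
  · obtain ⟨i, hi, hji⟩ := h₂₁ (𝒟.L - 1) (by have := 𝒟.hL; omega)
    have := le_of_seg_eq h₂₁ (by have := 𝒟.hL; omega) hi hji
    omega

end SegColl

theorem opt_refines_and_unique_general {K : ℕ} (p : (Fin K → Bool) → ℝ)
    (hpos : ∀ t, 0 < p t) (o : Equiv.Perm (Fin K))
    (𝒪 : SegColl K) (h𝒪 : memModel o 𝒪 p)
    (hmin : ∀ 𝒞 : SegColl K, memModel o 𝒞 p → 𝒪.df o ≤ 𝒞.df o) :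
    (∀ 𝒞 : SegColl K, memModel o 𝒞 p →
      ∀ i < 𝒪.L, ∃ j < 𝒞.L, 𝒪.seg o i ⊆ 𝒞.seg o j) ∧
    (∀ 𝒪' : SegColl K, memModel o 𝒪' p →
      (∀ 𝒞 : SegColl K, memModel o 𝒞 p → 𝒪'.df o ≤ 𝒞.df o) →
      SegColl.SameSegs o 𝒪' 𝒪) :=
  ⟨fun _ h𝒞 => SegColl.refines_of_forall_df_le hpos h𝒪 hmin h𝒞,
    fun _ h𝒪' hmin' => (SegColl.refines_of_forall_df_le hpos h𝒪' hmin' h𝒪).antisymm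
      (SegColl.refines_of_forall_df_le hpos h𝒪 hmin h𝒪')⟩

/-- If `𝒪 ∈ Seg(o)` contains `p` in its model and minimizes `df` among
such collections, then every collection `𝒞 ∈ Seg(o)` with `p ∈ M(𝒞)` is refined by `𝒪`
(every segment of `𝒪` lies in some segment of `𝒞`), and `𝒪` is unique. -/
theorem opt_refines_and_unique {K : ℕ} (p : (Fin K → Bool) → ℝ)
    (hdist : IsDist p) (hpos : ∀ t, 0 < p t) (o : Equiv.Perm (Fin K))
    (𝒪 : SegColl K) (h𝒪 : memModel o 𝒪 p)
    (hmin : ∀ 𝒞 : SegColl K, memModel o 𝒞 p → 𝒪.df o ≤ 𝒞.df o) :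
    (∀ 𝒞 : SegColl K, memModel o 𝒞 p →
      ∀ i < 𝒪.L, ∃ j < 𝒞.L, 𝒪.seg o i ⊆ 𝒞.seg o j) ∧
    (∀ 𝒪' : SegColl K, memModel o 𝒪' p →
      (∀ 𝒞 : SegColl K, memModel o 𝒞 p → 𝒪'.df o ≤ 𝒞.df o) →
      SegColl.SameSegs o 𝒪' 𝒪) :=
  opt_refines_and_unique_general p hpos o 𝒪 h𝒪 hmin
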